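/- arXiv:2407.15499 — 6 statements merged into one kernel-verified Lean document; each statement's English description precedes it below -/
import Mathlib

section
/- Let T ≥ 1, N ≥ 1, let U_1,…,U_T be unitary N×N complex matrices, let A and Π be orthogonal projections on ℂ^N, let ε ≥ 0, and let φ_0 ∈ ℂ^N be a unit vector with A φ_0 = 0 and ‖Π U_T U_{T−1} ⋯ U_1 φ_0‖² ≤ ε. Then the Hermitian matrix H = A ⊗ E_{0,0} + Σ_{t=1}^T H_t + Π ⊗ E_{T,T} on ℂ^N ⊗ ℂ^{T+1} has smallest eigenvalue at most ε/(T+1). -/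
open Matrix Kronecker

/-- The matrix unit `E s s' = e_s e_{s'}†` on `ℂ^{T+1}`. -/
noncomputable def matUnit (T : ℕ) (s s' : Fin (T + 1)) :
    Matrix (Fin (T + 1)) (Fin (T + 1)) ℂ :=
  Matrix.single s s' 1

/-- Kitaev's propagation term
`H_t = (1/2)(I ⊗ (E_{t,t} + E_{t-1,t-1}) - U_t ⊗ E_{t,t-1} - U_t† ⊗ E_{t-1,t})`,
where `t : Fin T` encodes the time step `t+1 ∈ {1,…,T}`, with clock indices
`t.succ = t+1` and `t.castSucc = t` in `Fin (T+1)`. -/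
noncomputable def kitaevTerm (T N : ℕ) (U : Matrix (Fin N) (Fin N) ℂ) (t : Fin T) :
    Matrix (Fin N × Fin (T + 1)) (Fin N × Fin (T + 1)) ℂ :=
  (1 / 2 : ℂ) •
    ((1 : Matrix (Fin N) (Fin N) ℂ) ⊗ₖ
        (matUnit T t.succ t.succ + matUnit T t.castSucc t.castSucc)
      - U ⊗ₖ matUnit T t.succ t.castSucc
      - Uᴴ ⊗ₖ matUnit T t.castSucc t.succ)

lemma kronUnit_mulVec (T N : ℕ) (B : Matrix (Fin N) (Fin N) ℂ) (s s' : Fin (T + 1))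
    (Ψ : Fin N × Fin (T + 1) → ℂ) (n : Fin N) (r : Fin (T + 1)) :
    ((B ⊗ₖ matUnit T s s') *ᵥ Ψ) (n, r)
      = if r = s then (B *ᵥ fun k => Ψ (k, s')) n else 0 := by
  simp only [Matrix.mulVec, dotProduct, matUnit, Matrix.single,
    Fintype.sum_prod_type, kroneckerMap_apply, Matrix.of_apply]
  by_cases h : r = s
  · subst h
    simp [Finset.sum_ite_eq, mul_ite, ite_and]
  · simp [h, Ne.symm h, mul_ite, ite_and]

lemma kronUnit_conjTranspose (T N : ℕ) (B : Matrix (Fin N) (Fin N) ℂ) (s s' : Fin (T + 1)) :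
    (B ⊗ₖ matUnit T s s')ᴴ = Bᴴ ⊗ₖ matUnit T s' s := by
  ext ⟨n, r⟩ ⟨k, l⟩
  simp [matUnit, Matrix.conjTranspose_apply, Matrix.single, and_comm,
    apply_ite (starRingEnd ℂ)]

lemma kitaevTerm_isHermitian (T N : ℕ) (U : Matrix (Fin N) (Fin N) ℂ) (t : Fin T) :
    (kitaevTerm T N U t).IsHermitian := by
  unfold Matrix.IsHermitian kitaevTerm
  rw [Matrix.kronecker_add, conjTranspose_smul, conjTranspose_sub, conjTranspose_sub,
    conjTranspose_add]
  simp only [kronUnit_conjTranspose, conjTranspose_one, conjTranspose_conjTranspose]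
  congr 1
  · norm_num
  · abel

lemma kitaevTerm_mulVec_zero (T N : ℕ) (U : Matrix (Fin N) (Fin N) ℂ) (t : Fin T)
    (hU : Uᴴ * U = 1)
    (φ : Fin (T + 1) → Fin N → ℂ)
    (hrec : φ t.succ = U *ᵥ (φ t.castSucc)) :
    kitaevTerm T N U t *ᵥ (fun p => φ p.2 p.1) = 0 := by
  funext p
  obtain ⟨n, r⟩ := p
  have hcs : φ t.castSucc = Uᴴ *ᵥ (φ t.succ) := by
    rw [hrec, Matrix.mulVec_mulVec, hU, Matrix.one_mulVec]
  have h1 : ((1 : Matrix (Fin N) (Fin N) ℂ) ⊗ₖ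
      (matUnit T t.succ t.succ + matUnit T t.castSucc t.castSucc)) *ᵥ
      (fun p => φ p.2 p.1)
      = (U ⊗ₖ matUnit T t.succ t.castSucc) *ᵥ (fun p => φ p.2 p.1)
        + (Uᴴ ⊗ₖ matUnit T t.castSucc t.succ) *ᵥ (fun p => φ p.2 p.1) := by
    rw [Matrix.kronecker_add, Matrix.add_mulVec]
    funext q
    obtain ⟨m, w⟩ := q
    simp only [Pi.add_apply, kronUnit_mulVec, Matrix.one_mulVec]
    congr 1
    · by_cases h : w = t.succ <;> simp [h, hrec]
    · by_cases h : w = t.castSucc <;> simp [h, hcs]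
  unfold kitaevTerm
  rw [Matrix.smul_mulVec, Matrix.sub_mulVec, Matrix.sub_mulVec, h1]
  simp only [add_sub_cancel_left, sub_self, smul_zero]

lemma exists_eigenvalue_le {n : Type*} [Fintype n] [DecidableEq n] [Nonempty n]
    {A : Matrix n n ℂ} (hA : A.IsHermitian) (ψ : n → ℂ) (r : ℝ)
    (hψ : star ψ ⬝ᵥ ψ = (r : ℂ)) :
    ∃ i, hA.eigenvalues i * r ≤ (star ψ ⬝ᵥ A.mulVec ψ).re := by
  classical
  set b := hA.eigenvectorBasis with hb
  set x : EuclideanSpace ℂ n := (WithLp.equiv 2 _).symm ψ with hx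
  set c : n → ℂ := fun i => inner ℂ (b i) x with hc
  have hexp : ψ = fun j => ∑ i, c i * (b i) j := by
    have h1 : (∑ i, c i • b i) = x := b.sum_repr' x
    have h1' : ∑ i, (c i) • (⇑(b i) : n → ℂ) = ψ := by
      have := congrArg WithLp.ofLp h1
      simpa [x] using this
    funext j
    have := congrArg (fun v => v j) h1'
    simpa [Finset.sum_apply] using this.symm
  have hmul : A.mulVec ψ = fun j => ∑ i, c i * ((hA.eigenvalues i : ℂ) * (b i) j) := by
    funext j
    rw [hexp]
    simp only [Matrix.mulVec, dotProduct, Finset.mul_sum, Finset.sum_mul]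
    rw [Finset.sum_comm]
    refine Finset.sum_congr rfl fun i _ => ?_
    have := congrArg (fun v => v j) (hA.mulVec_eigenvectorBasis i)
    simp only [Matrix.mulVec, dotProduct, Pi.smul_apply] at this
    calc ∑ k, A j k * (c i * (b i) k) = c i * ∑ k, A j k * (b i) k := by
          rw [Finset.mul_sum]; exact Finset.sum_congr rfl fun k _ => by ring
      _ = c i * ((hA.eigenvalues i : ℂ) * (b i) j) := by
          rw [show ∑ k, A j k * (b i) k
              = hA.eigenvalues i • (WithLp.equiv 2 (n → ℂ)) (hA.eigenvectorBasis i) j from this]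
          simp [Complex.real_smul, hb]
  have hortho : ∀ i, star ψ ⬝ᵥ ⇑(b i) = (starRingEnd ℂ) (c i) := by
    intro i
    have : (inner ℂ x (b i) : ℂ) = (starRingEnd ℂ) (c i) := by
      rw [hc, ← inner_conj_symm]
    rw [← this, EuclideanSpace.inner_eq_star_dotProduct]
    exact dotProduct_comm _ _
  have hpar : ∑ i, Complex.normSq (c i) = r := by
    have h1 : (inner ℂ x x : ℂ) = ∑ i, (starRingEnd ℂ) (c i) * c i := by
      rw [← OrthonormalBasis.sum_inner_mul_inner b x x]
      exact Finset.sum_congr rfl fun i _ => by rw [hc, ← inner_conj_symm]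
    have h2 : (inner ℂ x x : ℂ) = (r : ℂ) := by
      rw [EuclideanSpace.inner_eq_star_dotProduct, ← hψ]; exact dotProduct_comm _ _
    have h3 : (↑(∑ i, Complex.normSq (c i)) : ℂ) = (r : ℂ) := by
      push_cast
      rw [← h2, h1]
      exact Finset.sum_congr rfl fun i _ => by
        rw [Complex.normSq_eq_conj_mul_self]
    exact_mod_cast h3
  have hray : (star ψ ⬝ᵥ A.mulVec ψ).re = ∑ i, hA.eigenvalues i * Complex.normSq (c i) := by
    have : star ψ ⬝ᵥ A.mulVec ψ
        = ∑ i, (hA.eigenvalues i : ℂ) * ((starRingEnd ℂ) (c i) * c i) := by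
      rw [hmul]
      simp only [dotProduct, Pi.star_apply, Finset.mul_sum]
      rw [Finset.sum_comm]
      refine Finset.sum_congr rfl fun i _ => ?_
      have : ∑ k, star (ψ k) * (c i * ((hA.eigenvalues i : ℂ) * (b i) k))
          = (hA.eigenvalues i : ℂ) * c i * ∑ k, star (ψ k) * (b i) k := by
        rw [Finset.mul_sum]; exact Finset.sum_congr rfl fun k _ => by ring
      rw [this, show ∑ k, star (ψ k) * (b i) k = star ψ ⬝ᵥ ⇑(b i) from rfl, hortho i]
      ring
    rw [this, Complex.re_sum]
    refine Finset.sum_congr rfl fun i _ => ?_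
    rw [← Complex.normSq_eq_conj_mul_self]
    simp [Complex.ofReal_mul]
  obtain ⟨i0, _, hmin⟩ := Finset.exists_min_image Finset.univ hA.eigenvalues
    ⟨Classical.arbitrary n, Finset.mem_univ _⟩
  refine ⟨i0, ?_⟩
  rw [hray]
  calc hA.eigenvalues i0 * r = ∑ i, hA.eigenvalues i0 * Complex.normSq (c i) := by
        rw [← Finset.mul_sum, hpar]
    _ ≤ ∑ i, hA.eigenvalues i * Complex.normSq (c i) :=
        Finset.sum_le_sum fun i _ => mul_le_mul_of_nonneg_right
          (hmin i (Finset.mem_univ i)) (Complex.normSq_nonneg _)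

lemma sum_mulVec' {ι n m : Type*} [Fintype m] (s : Finset ι) (M : ι → Matrix n m ℂ)
    (v : m → ℂ) : (∑ i ∈ s, M i) *ᵥ v = ∑ i ∈ s, (M i *ᵥ v) := by
  funext j
  simp only [Matrix.mulVec, dotProduct, Matrix.sum_apply, Finset.sum_apply,
    Finset.sum_mul]
  rw [Finset.sum_comm]


/-- Completeness: if the circuit accepts a valid input with probability ≥ 1 - ε,
the Kitaev Hamiltonian has smallest eigenvalue at most ε/(T+1). -/
theorem stmt0 (T N : ℕ) (hT : 1 ≤ T) (hN : 1 ≤ N)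
    (U : Fin T → Matrix (Fin N) (Fin N) ℂ)
    (hU : ∀ t, (U t)ᴴ * U t = 1 ∧ U t * (U t)ᴴ = 1)
    (A P : Matrix (Fin N) (Fin N) ℂ)
    (hA : A.IsHermitian) (hA2 : A * A = A)
    (hP : P.IsHermitian) (hP2 : P * P = P)
    (ε : ℝ) (hε : 0 ≤ ε)
    (φ : Fin (T + 1) → Fin N → ℂ)
    (hφ0 : star (φ 0) ⬝ᵥ φ 0 = 1)
    (hAφ0 : A.mulVec (φ 0) = 0)
    (hrec : ∀ t : Fin T, φ t.succ = (U t).mulVec (φ t.castSucc))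
    (hacc : (star (P.mulVec (φ (Fin.last T))) ⬝ᵥ P.mulVec (φ (Fin.last T))).re ≤ ε) :
    ∃ hH : (A ⊗ₖ matUnit T 0 0 + ∑ t : Fin T, kitaevTerm T N (U t) t
        + P ⊗ₖ matUnit T (Fin.last T) (Fin.last T)).IsHermitian,
      ∃ i, hH.eigenvalues i ≤ ε / (T + 1) := by
  classical
  haveI : Nonempty (Fin N) := ⟨⟨0, hN⟩⟩
  -- Hermiticity
  have hH : (A ⊗ₖ matUnit T 0 0 + ∑ t : Fin T, kitaevTerm T N (U t) t
      + P ⊗ₖ matUnit T (Fin.last T) (Fin.last T)).IsHermitian := by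
    refine Matrix.IsHermitian.add (Matrix.IsHermitian.add ?_ ?_) ?_
    · show _ = _
      rw [kronUnit_conjTranspose, hA.eq]
    · show _ = _
      rw [Matrix.conjTranspose_sum]
      exact Finset.sum_congr rfl fun t _ => kitaevTerm_isHermitian T N (U t) t
    · show _ = _
      rw [kronUnit_conjTranspose, hP.eq]
  refine ⟨hH, ?_⟩
  -- the history state
  set Ψ : Fin N × Fin (T + 1) → ℂ := fun p => φ p.2 p.1 with hΨ
  -- each slice has norm one
  have hnorm : ∀ s : Fin (T + 1), star (φ s) ⬝ᵥ φ s = 1 := by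
    intro s
    induction s using Fin.induction with
    | zero => exact hφ0
    | succ t ih =>
      rw [hrec t, Matrix.star_mulVec, ← dotProduct_mulVec, Matrix.mulVec_mulVec,
        (hU t).1, Matrix.one_mulVec]
      exact ih
  -- total norm
  have hΨnorm : star Ψ ⬝ᵥ Ψ = (((T : ℝ) + 1 : ℝ) : ℂ) := by
    have : star Ψ ⬝ᵥ Ψ = ∑ r : Fin (T + 1), star (φ r) ⬝ᵥ φ r := by
      simp only [dotProduct, Fintype.sum_prod_type, Pi.star_apply, hΨ]
      rw [Finset.sum_comm]
    rw [this]
    simp only [hnorm]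
    simp
  -- H applied to Ψ
  have hAΨ : (A ⊗ₖ matUnit T 0 0) *ᵥ Ψ = 0 := by
    funext p
    obtain ⟨n, r⟩ := p
    rw [kronUnit_mulVec]
    have : (fun k => Ψ (k, 0)) = φ 0 := rfl
    rw [this, hAφ0]
    simp
  have hKΨ : (∑ t : Fin T, kitaevTerm T N (U t) t) *ᵥ Ψ = 0 := by
    rw [sum_mulVec']
    refine Finset.sum_eq_zero fun t _ => ?_
    exact kitaevTerm_mulVec_zero T N (U t) t (hU t).1 φ (hrec t)
  have hHΨ : (A ⊗ₖ matUnit T 0 0 + ∑ t : Fin T, kitaevTerm T N (U t) t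
      + P ⊗ₖ matUnit T (Fin.last T) (Fin.last T)) *ᵥ Ψ
      = (P ⊗ₖ matUnit T (Fin.last T) (Fin.last T)) *ᵥ Ψ := by
    rw [Matrix.add_mulVec, Matrix.add_mulVec, hAΨ, hKΨ]
    simp
  -- Rayleigh quotient value
  have hval : star Ψ ⬝ᵥ ((P ⊗ₖ matUnit T (Fin.last T) (Fin.last T)) *ᵥ Ψ)
      = star (P *ᵥ φ (Fin.last T)) ⬝ᵥ (P *ᵥ φ (Fin.last T)) := by
    have h1 : star Ψ ⬝ᵥ ((P ⊗ₖ matUnit T (Fin.last T) (Fin.last T)) *ᵥ Ψ)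
        = star (φ (Fin.last T)) ⬝ᵥ (P *ᵥ φ (Fin.last T)) := by
      simp only [dotProduct, Fintype.sum_prod_type, Pi.star_apply]
      rw [Finset.sum_comm]
      have : ∀ r : Fin (T + 1), ∀ n : Fin N,
          ((P ⊗ₖ matUnit T (Fin.last T) (Fin.last T)) *ᵥ Ψ) (n, r)
          = if r = Fin.last T then (P *ᵥ φ (Fin.last T)) n else 0 := by
        intro r n
        rw [kronUnit_mulVec]
      simp only [this, mul_ite, mul_zero]
      rw [Finset.sum_comm]
      simp [hΨ]
    have h2 : star (P *ᵥ φ (Fin.last T)) ⬝ᵥ (P *ᵥ φ (Fin.last T))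
        = star (φ (Fin.last T)) ⬝ᵥ (P *ᵥ φ (Fin.last T)) := by
      rw [Matrix.star_mulVec, ← dotProduct_mulVec, Matrix.mulVec_mulVec, hP.eq, hP2]
    rw [h1, h2]
  obtain ⟨i, hi⟩ := exists_eigenvalue_le hH Ψ ((T : ℝ) + 1) hΨnorm
  refine ⟨i, ?_⟩
  rw [hHΨ, hval] at hi
  have hpos : (0 : ℝ) < (T : ℝ) + 1 := by positivity
  rw [div_eq_inv_mul, ← mul_comm]
  calc hH.eigenvalues i = hH.eigenvalues i * ((T : ℝ) + 1) * ((T : ℝ) + 1)⁻¹ := by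
        field_simp
    _ ≤ ε * ((T : ℝ) + 1)⁻¹ := by
        apply mul_le_mul_of_nonneg_right (le_trans hi hacc)
        positivity
end

section
/- Let H_1 and H_2 be Hermitian positive semidefinite matrices on ℂ^N with nontrivial kernels N_1 = ker H_1 and N_2 = ker H_2. Suppose there is θ with 0 < θ ≤ π/2 such that |⟨x, y⟩| ≤ cos θ for all unit vectors x ∈ N_1 and y ∈ N_2, and suppose λ > 0 is such that every nonzero eigenvalue of H_1 and every nonzero eigenvalue of H_2 is at least λ. Then the smallest eigenvalue of H_1 + H_2 is at least λ · sin²(θ/2). -/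
open Matrix Kronecker ComplexOrder


lemma spectral_bound {N : ℕ} (H : Matrix (Fin N) (Fin N) ℂ) (hH : H.PosSemidef)
    (lam : ℝ)
    (hgap : ∀ i, hH.isHermitian.eigenvalues i ≠ 0 → lam ≤ hH.isHermitian.eigenvalues i)
    (v : Fin N → ℂ) :
    ∃ a : Fin N → ℂ, H.mulVec a = 0 ∧ star v ⬝ᵥ a = star a ⬝ᵥ a ∧
      lam * ((star v ⬝ᵥ v).re - (star a ⬝ᵥ a).re) ≤ (star v ⬝ᵥ H.mulVec v).re := by
  classical
  set h := hH.isHermitian with hh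
  set U : Matrix (Fin N) (Fin N) ℂ := (h.eigenvectorUnitary : Matrix (Fin N) (Fin N) ℂ) with hU
  have hU2 : U * star U = 1 := (Matrix.mem_unitaryGroup_iff).mp (h.eigenvectorUnitary).2
  have hU1 : star U * U = 1 := (Matrix.mem_unitaryGroup_iff').mp (h.eigenvectorUnitary).2
  set μ := h.eigenvalues with hμ
  set D : Matrix (Fin N) (Fin N) ℂ := Matrix.diagonal (fun i => (μ i : ℂ)) with hD
  have hspec : H = U * D * star U := by
    have := h.spectral_theorem
    rw [Unitary.conjStarAlgAut_apply] at this
    exact this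
  set w : Fin N → ℂ := star U *ᵥ v with hw
  set m : Fin N → ℂ := fun i => if μ i = 0 then w i else 0 with hm
  have hHU : H * U = U * D := by
    rw [hspec, Matrix.mul_assoc (U * D) (star U) U, hU1, Matrix.mul_one]
  have hDm : D *ᵥ m = 0 := by
    funext i
    rw [hD, mulVec_diagonal]
    by_cases hi : μ i = 0 <;> simp [hm, hi]
  have hsw : star w = star v ᵥ* U := by
    rw [hw, star_mulVec, Matrix.star_eq_conjTranspose U, conjTranspose_conjTranspose]
  -- dot of v with U *ᵥ m
  have hdot1 : ∀ q : Fin N → ℂ, star v ⬝ᵥ (U *ᵥ q) = star w ⬝ᵥ q := by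
    intro q
    rw [dotProduct_mulVec, hsw]
  have hsa : star (U *ᵥ m) = star m ᵥ* star U := by
    rw [star_mulVec, ← Matrix.star_eq_conjTranspose]
  have haa : star (U *ᵥ m) ⬝ᵥ (U *ᵥ m) = star m ⬝ᵥ m := by
    rw [dotProduct_mulVec, hsa, vecMul_vecMul, hU1, vecMul_one]
  have hwm : star w ⬝ᵥ m = star m ⬝ᵥ m := by
    simp only [dotProduct]
    refine Finset.sum_congr rfl fun i _ => ?_
    by_cases hi : μ i = 0 <;> simp [hm, hi]
  refine ⟨U *ᵥ m, ?_, ?_, ?_⟩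
  · show H *ᵥ (U *ᵥ m) = 0
    rw [mulVec_mulVec, hHU, ← mulVec_mulVec, hDm, mulVec_zero]
  · rw [hdot1, haa, hwm]
  · -- main inequality
    have hvw : star v ⬝ᵥ v = star w ⬝ᵥ w := by
      rw [hsw, hw, dotProduct_mulVec, vecMul_vecMul, hU2, vecMul_one]
    have hHv : star v ⬝ᵥ (H *ᵥ v) = star w ⬝ᵥ (D *ᵥ w) := by
      rw [hspec, ← mulVec_mulVec, ← hw, ← mulVec_mulVec, hdot1]
    rw [haa, hHv, hvw]
    have hww : (star w ⬝ᵥ w).re = ∑ i, Complex.normSq (w i) := by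
      simp [dotProduct, Complex.normSq_apply]
    have hmm : (star m ⬝ᵥ m).re = ∑ i, (if μ i = 0 then Complex.normSq (w i) else 0) := by
      simp only [dotProduct]
      rw [Complex.re_sum]
      refine Finset.sum_congr rfl fun i _ => ?_
      by_cases hi : μ i = 0 <;>
        simp [hm, hi, ← Complex.normSq_eq_conj_mul_self]
    have hDw : (star w ⬝ᵥ (D *ᵥ w)).re = ∑ i, μ i * Complex.normSq (w i) := by
      simp only [dotProduct]
      rw [Complex.re_sum]
      refine Finset.sum_congr rfl fun i _ => ?_
      rw [hD, mulVec_diagonal]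
      have : (star w) i * ((μ i : ℂ) * w i) = ((μ i * Complex.normSq (w i) : ℝ) : ℂ) := by
        push_cast
        rw [Complex.normSq_eq_conj_mul_self]
        simp [Pi.star_apply]
        ring
      rw [this, Complex.ofReal_re]
    rw [hww, hmm, hDw, ← Finset.sum_sub_distrib, Finset.mul_sum]
    refine Finset.sum_le_sum fun i _ => ?_
    by_cases hi : μ i = 0
    · simp [hi]
    · have h1 := hgap i hi
      have h0 : 0 ≤ Complex.normSq (w i) := Complex.normSq_nonneg _
      simp only [hi, if_false]
      nlinarith

lemma star_dot_self_re {N : ℕ} (a : Fin N → ℂ) :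
    star a ⬝ᵥ a = ((∑ i, Complex.normSq (a i) : ℝ) : ℂ) := by
  simp [dotProduct, Complex.normSq_eq_conj_mul_self]

lemma cs_dot {N : ℕ} (x y : Fin N → ℂ) :
    ((star x ⬝ᵥ y).re)^2 ≤ (star x ⬝ᵥ x).re * (star y ⬝ᵥ y).re := by
  set x' : EuclideanSpace ℂ (Fin N) := (WithLp.equiv 2 _).symm x with hx'
  set y' : EuclideanSpace ℂ (Fin N) := (WithLp.equiv 2 _).symm y with hy'
  have hxy : star x ⬝ᵥ y = inner ℂ x' y' := by rw [dotProduct_comm]; rfl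
  have hxx : star x ⬝ᵥ x = inner ℂ x' x' := by rw [dotProduct_comm]; rfl
  have hyy : star y ⬝ᵥ y = inner ℂ y' y' := by rw [dotProduct_comm]; rfl
  have h1 : |(inner ℂ x' y' : ℂ).re| ≤ ‖(inner ℂ x' y' : ℂ)‖ := Complex.abs_re_le_norm _
  have h2 : ‖(inner ℂ x' y' : ℂ)‖ ≤ ‖x'‖ * ‖y'‖ := norm_inner_le_norm x' y'
  have h3 : ((inner ℂ x' x' : ℂ)).re = ‖x'‖^2 := by
    simpa using (inner_self_eq_norm_sq (𝕜 := ℂ) x')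
  have h4 : ((inner ℂ y' y' : ℂ)).re = ‖y'‖^2 := by
    simpa using (inner_self_eq_norm_sq (𝕜 := ℂ) y')
  rw [hxy, hxx, hyy, h3, h4]
  calc ((inner ℂ x' y' : ℂ).re)^2 ≤ (‖x'‖ * ‖y'‖)^2 := by
        rw [← sq_abs]
        exact pow_le_pow_left₀ (abs_nonneg _) (h1.trans h2) 2
    _ = ‖x'‖^2 * ‖y'‖^2 := by ring

lemma unit_scale {N : ℕ} (a : Fin N → ℂ) (α : ℝ) (hpos : 0 < α)
    (haa : star a ⬝ᵥ a = (α : ℂ)) :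
    star ((((Real.sqrt α)⁻¹ : ℝ) : ℂ) • a) ⬝ᵥ ((((Real.sqrt α)⁻¹ : ℝ) : ℂ) • a) = 1 := by
  rw [star_smul, smul_dotProduct, dotProduct_smul, haa, smul_eq_mul, smul_eq_mul]
  rw [show star ((((Real.sqrt α)⁻¹ : ℝ) : ℂ)) = (((Real.sqrt α)⁻¹ : ℝ) : ℂ) by
    simp [Complex.star_def, Complex.conj_ofReal]]
  norm_cast
  rw [show ((Real.sqrt α)⁻¹ * ((Real.sqrt α)⁻¹ * α) : ℝ)
      = α / (Real.sqrt α * Real.sqrt α) by ring]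
  rw [Real.mul_self_sqrt hpos.le, div_self (ne_of_gt hpos)]

lemma abs_dot_scale {N : ℕ} (a b : Fin N → ℂ) (ca cb : ℝ) (hca : 0 ≤ ca) (hcb : 0 ≤ cb) :
    ‖star ((ca : ℂ) • a) ⬝ᵥ ((cb : ℂ) • b)‖
      = ca * cb * ‖star a ⬝ᵥ b‖ := by
  rw [star_smul, smul_dotProduct, dotProduct_smul, smul_eq_mul, smul_eq_mul]
  rw [show star ((ca : ℝ) : ℂ) = ((ca : ℝ) : ℂ) by simp [Complex.star_def, Complex.conj_ofReal]]
  rw [norm_mul, norm_mul, Complex.norm_real, Complex.norm_real, Real.norm_eq_abs, Real.norm_eq_abs,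
    abs_of_nonneg hca, abs_of_nonneg hcb]
  ring

set_option maxHeartbeats 1000000 in
/-- The geometric lemma: a lower bound on the smallest eigenvalue of the sum of two
positive semidefinite Hermitian matrices in terms of the angle `θ` between their kernels
and a lower bound `lam` on their nonzero eigenvalues. -/
theorem stmt2 (N : ℕ) (hN : 1 ≤ N)
    (H1 H2 : Matrix (Fin N) (Fin N) ℂ)
    (hH1 : H1.PosSemidef) (hH2 : H2.PosSemidef)
    (hker1 : ∃ x : Fin N → ℂ, x ≠ 0 ∧ H1.mulVec x = 0)
    (hker2 : ∃ y : Fin N → ℂ, y ≠ 0 ∧ H2.mulVec y = 0)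
    (θ : ℝ) (hθ0 : 0 < θ) (hθ1 : θ ≤ Real.pi / 2)
    (hangle : ∀ x y : Fin N → ℂ, H1.mulVec x = 0 → H2.mulVec y = 0 →
      star x ⬝ᵥ x = 1 → star y ⬝ᵥ y = 1 → ‖star x ⬝ᵥ y‖ ≤ Real.cos θ)
    (lam : ℝ) (hlam : 0 < lam)
    (hgap1 : ∀ i, hH1.isHermitian.eigenvalues i ≠ 0 → lam ≤ hH1.isHermitian.eigenvalues i)
    (hgap2 : ∀ i, hH2.isHermitian.eigenvalues i ≠ 0 → lam ≤ hH2.isHermitian.eigenvalues i) :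
    ∀ i, lam * Real.sin (θ / 2) ^ 2 ≤ (hH1.isHermitian.add hH2.isHermitian).eigenvalues i := by
  intro i
  classical
  set h12 := hH1.isHermitian.add hH2.isHermitian with hh12
  set v : Fin N → ℂ := ⇑(h12.eigenvectorBasis i) with hv
  set μ : ℝ := h12.eigenvalues i with hμ
  have hmv : (H1 + H2) *ᵥ v = μ • v := h12.mulVec_eigenvectorBasis i
  have horth := orthonormal_iff_ite.mp h12.eigenvectorBasis.orthonormal i i
  have hvv : star v ⬝ᵥ v = 1 := by
    have h1 : (inner ℂ (h12.eigenvectorBasis i) (h12.eigenvectorBasis i) : ℂ) = 1 := by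
      simpa using horth
    rw [dotProduct_comm]; exact h1
  have hvvre : (star v ⬝ᵥ v).re = 1 := by rw [hvv]; simp
  have hcos : 0 ≤ Real.cos θ := by
    apply Real.cos_nonneg_of_mem_Icc
    constructor
    · have := Real.pi_pos; linarith
    · exact hθ1
  have hquad : (star v ⬝ᵥ ((H1 + H2) *ᵥ v)).re = μ := by
    rw [hmv]
    have hsm : (μ : ℝ) • v = (μ : ℂ) • v := by
      funext j; simp [Complex.real_smul]
    rw [hsm, dotProduct_smul, hvv]
    simp
  obtain ⟨a, ha0, hva, hbnd1⟩ := spectral_bound H1 hH1 lam hgap1 v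
  obtain ⟨b, hb0, hvb, hbnd2⟩ := spectral_bound H2 hH2 lam hgap2 v
  set α : ℝ := (star a ⬝ᵥ a).re with hα
  set β : ℝ := (star b ⬝ᵥ b).re with hβ
  have haa : star a ⬝ᵥ a = (α : ℂ) := by
    rw [hα, star_dot_self_re]; simp
  have hbb : star b ⬝ᵥ b = (β : ℂ) := by
    rw [hβ, star_dot_self_re]; simp
  have hα0 : 0 ≤ α := by
    rw [hα, star_dot_self_re]
    simpa using Finset.sum_nonneg fun j _ => Complex.normSq_nonneg (a j)
  have hβ0 : 0 ≤ β := by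
    rw [hβ, star_dot_self_re]
    simpa using Finset.sum_nonneg fun j _ => Complex.normSq_nonneg (b j)
  have hab : ‖star a ⬝ᵥ b‖ ≤ Real.cos θ * (Real.sqrt α * Real.sqrt β) := by
    by_cases hA : α = 0
    · have ha : a = 0 := by
        have h0 : star a ⬝ᵥ a = 0 := by rw [haa, hA]; simp
        exact dotProduct_star_self_eq_zero.mp h0
      rw [ha]
      simp only [Pi.zero_def, star_zero]
      rw [show (star (fun _ : Fin N => (0:ℂ))) ⬝ᵥ b = 0 by simp [dotProduct]]
      simp only [norm_zero]
      positivity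
    · by_cases hB : β = 0
      · have hb : b = 0 := by
          have h0 : star b ⬝ᵥ b = 0 := by rw [hbb, hB]; simp
          exact dotProduct_star_self_eq_zero.mp h0
        rw [hb]
        rw [show (star a) ⬝ᵥ (0 : Fin N → ℂ) = 0 by simp]
        simp only [norm_zero]
        positivity
      · have hαpos : 0 < α := lt_of_le_of_ne hα0 (Ne.symm hA)
        have hβpos : 0 < β := lt_of_le_of_ne hβ0 (Ne.symm hB)
        have hsa : (0:ℝ) < Real.sqrt α := Real.sqrt_pos.mpr hαpos
        have hsb : (0:ℝ) < Real.sqrt β := Real.sqrt_pos.mpr hβpos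
        set x : Fin N → ℂ := ((((Real.sqrt α)⁻¹ : ℝ)) : ℂ) • a with hx
        set y : Fin N → ℂ := ((((Real.sqrt β)⁻¹ : ℝ)) : ℂ) • b with hy
        have hx0 : H1 *ᵥ x = 0 := by rw [hx, mulVec_smul, ha0, smul_zero]
        have hy0 : H2 *ᵥ y = 0 := by rw [hy, mulVec_smul, hb0, smul_zero]
        have hxx : star x ⬝ᵥ x = 1 := unit_scale a α hαpos haa
        have hyy : star y ⬝ᵥ y = 1 := unit_scale b β hβpos hbb
        have hang := hangle x y hx0 hy0 hxx hyy
        rw [hx, hy, abs_dot_scale a b _ _ (by positivity) (by positivity)] at hang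
        have hscale : ‖star a ⬝ᵥ b‖
            = (Real.sqrt α * Real.sqrt β) *
              ((Real.sqrt α)⁻¹ * (Real.sqrt β)⁻¹ * ‖star a ⬝ᵥ b‖) := by
          field_simp
        rw [hscale]
        calc (Real.sqrt α * Real.sqrt β) *
              ((Real.sqrt α)⁻¹ * (Real.sqrt β)⁻¹ * ‖star a ⬝ᵥ b‖)
            ≤ (Real.sqrt α * Real.sqrt β) * Real.cos θ := by
              apply mul_le_mul_of_nonneg_left hang (by positivity)
          _ = Real.cos θ * (Real.sqrt α * Real.sqrt β) := by ring
  -- geometric bound on the sum of projections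
  have hsum : α + β ≤ 1 + Real.cos θ := by
    have hvab : (star v ⬝ᵥ (a + b)).re = α + β := by
      rw [dotProduct_add, hva, hvb, haa, hbb]
      simp
    have hcs := cs_dot v (a + b)
    rw [hvab, hvvre, one_mul] at hcs
    have hba : star b ⬝ᵥ a = (starRingEnd ℂ) (star a ⬝ᵥ b) := by
      simp [dotProduct, map_sum, mul_comm]
    have habre : (star (a + b) ⬝ᵥ (a + b)).re = α + β + 2 * (star a ⬝ᵥ b).re := by
      rw [star_add, add_dotProduct, dotProduct_add, dotProduct_add, haa, hbb, hba]
      simp only [Complex.add_re, Complex.conj_re, Complex.ofReal_re]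
      ring
    rw [habre] at hcs
    have hre_le : (star a ⬝ᵥ b).re ≤ Real.cos θ * (Real.sqrt α * Real.sqrt β) :=
      le_trans (Complex.re_le_norm _) hab
    have hamgm : Real.sqrt α * Real.sqrt β ≤ (α + β) / 2 := by
      nlinarith [Real.sq_sqrt hα0, Real.sq_sqrt hβ0, sq_nonneg (Real.sqrt α - Real.sqrt β),
        Real.sqrt_nonneg α, Real.sqrt_nonneg β]
    have hmul := mul_le_mul_of_nonneg_left hamgm hcos
    have hkey : (α + β)^2 ≤ (α + β) + Real.cos θ * (α + β) := by linarith
    rcases eq_or_lt_of_le (by positivity : (0:ℝ) ≤ α + β) with h|h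
    · linarith
    · nlinarith [hkey]
  have hsplit : (star v ⬝ᵥ ((H1 + H2) *ᵥ v)).re
      = (star v ⬝ᵥ (H1 *ᵥ v)).re + (star v ⬝ᵥ (H2 *ᵥ v)).re := by
    rw [add_mulVec, dotProduct_add]
    simp
  have h2θ : 2 * (θ / 2) = θ := by ring
  have hsin : Real.sin (θ/2)^2 = 1/2 - Real.cos θ / 2 := by
    rw [Real.sin_sq_eq_half_sub, h2θ]
  have hs2 : 0 ≤ Real.sin (θ/2)^2 := sq_nonneg _
  rw [hvvre] at hbnd1 hbnd2
  have hfin : lam * (2 - (α + β)) ≤ μ := by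
    rw [← hquad, hsplit]
    have := add_le_add hbnd1 hbnd2
    linarith
  calc lam * Real.sin (θ/2)^2 ≤ lam * (1 - Real.cos θ) := by nlinarith
    _ ≤ lam * (2 - (α+β)) := by nlinarith
    _ ≤ μ := hfin
end

section
/- Let T ≥ 1, N ≥ 1, let U_1,…,U_T be unitary N×N complex matrices, let φ_0 ∈ ℂ^N be a unit vector, and let Φ be the associated history state. Then for every s with 1 ≤ s ≤ T, the Kitaev propagation term H_s (built from U_s) satisfies H_s Φ = 0; consequently Φ lies in the kernel of Σ_{t=1}^T H_t. -/
open Matrix Kronecker ComplexOrder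

/-- The history state `Φ = (T+1)^{-1/2} Σ_t φ_t ⊗ e_t` is annihilated by every Kitaev
propagation term, hence lies in the kernel of the propagation Hamiltonian. -/
theorem stmt5 (T N : ℕ) (hT : 1 ≤ T) (hN : 1 ≤ N)
    (U : Fin T → Matrix (Fin N) (Fin N) ℂ)
    (hU : ∀ t, (U t)ᴴ * U t = 1 ∧ U t * (U t)ᴴ = 1)
    (φ : Fin (T + 1) → Fin N → ℂ)
    (hφ0 : star (φ 0) ⬝ᵥ φ 0 = 1)
    (hrec : ∀ t : Fin T, φ t.succ = (U t).mulVec (φ t.castSucc))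
    (Φ : Fin N × Fin (T + 1) → ℂ)
    (hΦ : Φ = fun p => (Complex.ofReal (Real.sqrt (T + 1)))⁻¹ * φ p.2 p.1) :
    (∀ s : Fin T, (kitaevTerm T N (U s) s).mulVec Φ = 0) ∧
    (∑ t : Fin T, kitaevTerm T N (U t) t).mulVec Φ = 0 := by
  have key : ∀ s : Fin T, (kitaevTerm T N (U s) s).mulVec Φ = 0 := by
    intro s
    have hback : (U s)ᴴ.mulVec (φ s.succ) = φ s.castSucc := by
      rw [hrec s, Matrix.mulVec_mulVec, (hU s).1, Matrix.one_mulVec]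
    have hfwd := congrFun (hrec s)
    have hbackfun := congrFun hback
    simp only [Matrix.mulVec, dotProduct] at hfwd hbackfun
    funext p
    obtain ⟨i, r⟩ := p
    have hne : s.castSucc ≠ s.succ := (Fin.castSucc_lt_succ (i := s)).ne
    set c := (Complex.ofReal (Real.sqrt (T + 1)))⁻¹
    simp only [kitaevTerm, matUnit, hΦ, Matrix.mulVec, dotProduct,
      Fintype.sum_prod_type, Matrix.sub_apply, Matrix.add_apply, Matrix.kroneckerMap_apply,
      Matrix.single, Matrix.one_apply, Matrix.of_apply, Matrix.smul_apply,
      Pi.zero_apply, smul_eq_mul, mul_ite, ite_mul, mul_zero, zero_mul, mul_one, one_mul]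
    simp only [mul_sub, mul_add, sub_mul, add_mul, ite_mul, mul_ite, zero_mul, mul_zero,
      one_mul, mul_one, ite_and, Finset.sum_sub_distrib, Finset.sum_add_distrib,
      Finset.sum_ite_eq, Finset.sum_ite_eq', Finset.mem_univ, if_true,
      Finset.sum_ite_irrel, Finset.sum_const_zero]
    by_cases h1 : s.succ = r
    · have h2 : s.castSucc ≠ r := h1 ▸ hne
      simp only [h1, h2, if_true, if_false, ite_true, ite_false, sub_zero,
        Finset.sum_ite_eq, Finset.mem_univ, if_true, add_zero, zero_add]
      rw [sub_eq_zero, ← h1, hfwd i, Finset.mul_sum, Finset.mul_sum]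
      exact Finset.sum_congr rfl fun x _ => by ring
    · by_cases h2 : s.castSucc = r
      · simp only [h1, h2, if_true, if_false, ite_true, ite_false, sub_zero, zero_sub,
          Finset.sum_ite_eq, Finset.mem_univ, if_true, add_zero, zero_add, zero_sub,
          Finset.sum_const_zero]
        rw [sub_eq_zero, ← h2, ← hbackfun i, Finset.mul_sum, Finset.mul_sum]
        exact Finset.sum_congr rfl fun x _ => by ring
      · simp [h1, h2]
  refine ⟨key, ?_⟩
  funext p
  have h : (∑ t : Fin T, kitaevTerm T N (U t) t).mulVec Φ p
      = ∑ t : Fin T, ((kitaevTerm T N (U t) t).mulVec Φ) p := by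
    simp only [Matrix.mulVec, dotProduct, Matrix.sum_apply, Finset.sum_mul]
    exact Finset.sum_comm
  simp [h, key]
end

section
/- Let T ≥ 1, N ≥ 1, let U_1,…,U_T be unitary N×N complex matrices, let φ_0^v and φ_0^i be orthogonal unit vectors in ℂ^N with associated history states Φ^v and Φ^i (built from the same unitaries), let Π_acc be an orthogonal projection on ℂ^N, and suppose ‖Π_acc φ_T^v‖² ≤ ε where φ_T^v = U_T ⋯ U_1 φ_0^v. Then |⟨Φ^v, (I − (I − Π_acc) ⊗ E_{T,T}) Φ^i⟩| ≤ √ε/(T+1). -/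
open Matrix Kronecker ComplexOrder

lemma cs_aux {n : ℕ} (x y : Fin n → ℂ) :
    ‖star x ⬝ᵥ y‖ ≤
      Real.sqrt ((star x ⬝ᵥ x).re) * Real.sqrt ((star y ⬝ᵥ y).re) := by
  have h := norm_inner_le_norm (𝕜 := ℂ)
    ((WithLp.equiv 2 (Fin n → ℂ)).symm x) ((WithLp.equiv 2 (Fin n → ℂ)).symm y)
  have hx : ‖(WithLp.equiv 2 (Fin n → ℂ)).symm x‖ = Real.sqrt ((star x ⬝ᵥ x).re) := by
    rw [norm_eq_sqrt_re_inner (𝕜 := ℂ), WithLp.equiv_symm_apply, EuclideanSpace.inner_toLp_toLp, dotProduct_comm]; rfl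
  have hy : ‖(WithLp.equiv 2 (Fin n → ℂ)).symm y‖ = Real.sqrt ((star y ⬝ᵥ y).re) := by
    rw [norm_eq_sqrt_re_inner (𝕜 := ℂ), WithLp.equiv_symm_apply, EuclideanSpace.inner_toLp_toLp, dotProduct_comm]; rfl
  rw [hx, hy, WithLp.equiv_symm_apply, EuclideanSpace.inner_toLp_toLp, dotProduct_comm] at h
  exact h

lemma kron_mulVec_unit {T N : ℕ} (A : Matrix (Fin N) (Fin N) ℂ)
    (v : Fin N × Fin (T + 1) → ℂ) (p : Fin N × Fin (T + 1)) :
    ((A ⊗ₖ matUnit T (Fin.last T) (Fin.last T)) *ᵥ v) p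
      = if p.2 = Fin.last T then ∑ m, A p.1 m * v (m, Fin.last T) else 0 := by
  simp [Matrix.mulVec, dotProduct, matUnit, Matrix.single,
    Fintype.sum_prod_type, ite_and, eq_comm, mul_comm, mul_ite, ite_mul]


/-- The cross-term bound in the soundness proof: for orthogonal unit initial states
`φ_0^v, φ_0^i` with history states `Φ^v, Φ^i`, and an accepting projection `Π_acc` with
`‖Π_acc φ_T^v‖² ≤ ε`, the overlap through the kernel of the output-check term is at most
`√ε/(T+1)`. -/
theorem stmt8 (T N : ℕ) (hT : 1 ≤ T) (hN : 1 ≤ N)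
    (U : Fin T → Matrix (Fin N) (Fin N) ℂ)
    (hU : ∀ t, (U t)ᴴ * U t = 1 ∧ U t * (U t)ᴴ = 1)
    (φv φi : Fin (T + 1) → Fin N → ℂ)
    (hφv0 : star (φv 0) ⬝ᵥ φv 0 = 1)
    (hφi0 : star (φi 0) ⬝ᵥ φi 0 = 1)
    (horth : star (φv 0) ⬝ᵥ φi 0 = 0)
    (hrecv : ∀ t : Fin T, φv t.succ = (U t).mulVec (φv t.castSucc))
    (hreci : ∀ t : Fin T, φi t.succ = (U t).mulVec (φi t.castSucc))
    (Φv Φi : Fin N × Fin (T + 1) → ℂ)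
    (hΦv : Φv = fun p => (Complex.ofReal (Real.sqrt (T + 1)))⁻¹ * φv p.2 p.1)
    (hΦi : Φi = fun p => (Complex.ofReal (Real.sqrt (T + 1)))⁻¹ * φi p.2 p.1)
    (Pacc : Matrix (Fin N) (Fin N) ℂ)
    (hPacc : Pacc.IsHermitian) (hPacc2 : Pacc * Pacc = Pacc)
    (ε : ℝ)
    (hε : (star (Pacc.mulVec (φv (Fin.last T))) ⬝ᵥ
      Pacc.mulVec (φv (Fin.last T))).re ≤ ε) :
    ‖(star Φv ⬝ᵥ
        ((1 : Matrix (Fin N × Fin (T + 1)) (Fin N × Fin (T + 1)) ℂ)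
          - ((1 : Matrix (Fin N) (Fin N) ℂ) - Pacc) ⊗ₖ
              matUnit T (Fin.last T) (Fin.last T)).mulVec Φi)‖
      ≤ Real.sqrt ε / (T + 1) := by
  have key : ∀ (t : Fin T) (x y : Fin N → ℂ),
      star ((U t).mulVec x) ⬝ᵥ (U t).mulVec y = star x ⬝ᵥ y := by
    intro t x y
    rw [Matrix.star_mulVec, Matrix.dotProduct_mulVec, Matrix.vecMul_vecMul,
      (hU t).1, Matrix.vecMul_one]
  have horthT : ∀ t : Fin (T + 1), star (φv t) ⬝ᵥ φi t = 0 := by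
    intro t
    induction t using Fin.induction with
    | zero => exact horth
    | succ i ih => rw [hrecv i, hreci i, key]; exact ih
  have hnormiT : ∀ t : Fin (T + 1), star (φi t) ⬝ᵥ φi t = 1 := by
    intro t
    induction t using Fin.induction with
    | zero => exact hφi0
    | succ i ih => rw [hreci i, key]; exact ih
  set c : ℂ := (Complex.ofReal (Real.sqrt (T + 1)))⁻¹ with hc
  have hcstar : star c = c := by simp [hc, ← Complex.ofReal_inv]
  have hsq : c * c = (((T : ℂ)) + 1)⁻¹ := by
    rw [hc, ← mul_inv, ← Complex.ofReal_mul, Real.mul_self_sqrt (by positivity)]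
    push_cast; ring
  -- first piece
  have h1 : star Φv ⬝ᵥ Φi = 0 := by
    subst hΦv hΦi
    simp only [dotProduct, Pi.star_apply, star_mul', hcstar, Complex.star_def]
    rw [Fintype.sum_prod_type, Finset.sum_comm]
    have : ∀ t : Fin (T + 1),
        (∑ n : Fin N, c * (starRingEnd ℂ) (φv t n) * (c * φi t n)) = 0 := by
      intro t
      have ht := horthT t
      simp only [dotProduct, Pi.star_apply, Complex.star_def] at ht
      calc (∑ n : Fin N, c * (starRingEnd ℂ) (φv t n) * (c * φi t n))
          = (c * c) * ∑ n : Fin N, (starRingEnd ℂ) (φv t n) * φi t n := by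
            rw [Finset.mul_sum]; exact Finset.sum_congr rfl fun n _ => by ring
        _ = 0 := by rw [ht, mul_zero]
    simp [this]
  -- second piece
  have h2 : ∀ (A : Matrix (Fin N) (Fin N) ℂ),
      star Φv ⬝ᵥ ((A ⊗ₖ matUnit T (Fin.last T) (Fin.last T)) *ᵥ Φi)
        = (c * c) * (star (φv (Fin.last T)) ⬝ᵥ (A *ᵥ φi (Fin.last T))) := by
    intro A
    subst hΦv hΦi
    simp only [dotProduct, Pi.star_apply, star_mul', hcstar, Complex.star_def,
      kron_mulVec_unit]
    rw [Fintype.sum_prod_type, Finset.sum_comm]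
    rw [Finset.sum_eq_single (Fin.last T)]
    · trans ∑ n : Fin N, ∑ m : Fin N,
        (c * c) * ((starRingEnd ℂ) (φv (Fin.last T) n) * (A n m * φi (Fin.last T) m))
      · refine Finset.sum_congr rfl fun n _ => ?_
        rw [if_pos rfl, Finset.mul_sum]
        exact Finset.sum_congr rfl fun m _ => by ring
      · simp only [Matrix.mulVec, dotProduct, Pi.star_apply, Complex.star_def,
          Finset.mul_sum]
    · intro t _ ht
      simp [ht]
    · simp
  -- combine
  rw [Matrix.sub_mulVec, Matrix.one_mulVec, dotProduct_sub, h1, zero_sub,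
    h2, Matrix.sub_mulVec, Matrix.one_mulVec, dotProduct_sub,
    horthT (Fin.last T), zero_sub, mul_neg, neg_neg, hsq]
  have hswap : star (φv (Fin.last T)) ⬝ᵥ (Pacc *ᵥ φi (Fin.last T))
      = star (Pacc *ᵥ φv (Fin.last T)) ⬝ᵥ φi (Fin.last T) := by
    rw [Matrix.star_mulVec, hPacc.eq, Matrix.dotProduct_mulVec]
  rw [hswap, norm_mul]
  have habs : ‖(((T : ℂ) + 1)⁻¹)‖ = ((T : ℝ) + 1)⁻¹ := by
    rw [norm_inv]
    norm_cast
  rw [habs]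
  have hb := cs_aux (Pacc *ᵥ φv (Fin.last T)) (φi (Fin.last T))
  rw [hnormiT (Fin.last T)] at hb
  simp only [Complex.one_re, Real.sqrt_one, mul_one] at hb
  have hb2 : ‖star (Pacc *ᵥ φv (Fin.last T)) ⬝ᵥ φi (Fin.last T)‖
      ≤ Real.sqrt ε := hb.trans (Real.sqrt_le_sqrt hε)
  rw [div_eq_inv_mul]
  have hpos : (0:ℝ) ≤ ((T : ℝ) + 1)⁻¹ := by positivity
  exact mul_le_mul_of_nonneg_left hb2 hpos
end

section
/- Let T ≥ 1, N ≥ 1, let U_1,…,U_T be unitary N×N complex matrices, let A and Π_acc be orthogonal projections on ℂ^N, let 0 ≤ ε ≤ 1, and suppose that for every unit vector ψ ∈ ℂ^N with A ψ = 0 one has ‖Π_acc U_T ⋯ U_1 ψ‖² ≤ ε. Then for every unit vector φ_0 ∈ ℂ^N with associated history state Φ, ‖P_init P_final Φ‖² ≤ (T + ε + 2√ε)/(T+1), where P_init = I − A ⊗ E_{0,0} and P_final = I − (I − Π_acc) ⊗ E_{T,T}. -/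
open Matrix Kronecker ComplexOrder

namespace Stmt9Aux

variable {n : Type*} [Fintype n] [DecidableEq n]

noncomputable def g (x : n → ℂ) : ℝ := ∑ i, Complex.normSq (x i)

lemma g_nonneg (x : n → ℂ) : 0 ≤ g x :=
  Finset.sum_nonneg fun i _ => Complex.normSq_nonneg _

lemma dot_self_eq_g (x : n → ℂ) : star x ⬝ᵥ x = (g x : ℂ) := by
  simp [dotProduct, g, Complex.normSq_eq_conj_mul_self]

lemma re_dot_self (x : n → ℂ) : (star x ⬝ᵥ x).re = g x := by
  rw [dot_self_eq_g]; simp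

lemma g_eq_zero_iff (x : n → ℂ) : g x = 0 ↔ x = 0 := by
  constructor
  · intro h
    funext i
    have := (Finset.sum_eq_zero_iff_of_nonneg
      (fun i _ => Complex.normSq_nonneg (x i))).mp h i (Finset.mem_univ i)
    simpa using this
  · intro h; simp [h, g]

lemma g_smul (c : ℂ) (x : n → ℂ) : g (c • x) = Complex.normSq c * g x := by
  simp [g, Complex.normSq_mul, Finset.mul_sum]

lemma dot_mulVec_self (B : Matrix n n ℂ) (x : n → ℂ) :
    star (B.mulVec x) ⬝ᵥ (B.mulVec x) = star x ⬝ᵥ ((Bᴴ * B).mulVec x) := by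
  rw [Matrix.star_mulVec, Matrix.dotProduct_mulVec, Matrix.vecMul_vecMul,
    Matrix.dotProduct_mulVec]

lemma g_mulVec (B : Matrix n n ℂ) (x : n → ℂ) :
    g (B.mulVec x) = (star x ⬝ᵥ ((Bᴴ * B).mulVec x)).re := by
  rw [← re_dot_self, dot_mulVec_self]

lemma g_unitary (B : Matrix n n ℂ) (hB : Bᴴ * B = 1) (x : n → ℂ) :
    g (B.mulVec x) = g x := by
  rw [g_mulVec, hB, Matrix.one_mulVec, re_dot_self]

lemma g_proj_le (P : Matrix n n ℂ) (hP : P.IsHermitian) (hP2 : P * P = P)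
    (x : n → ℂ) : g (P.mulVec x) ≤ g x := by
  have h1 : g (P.mulVec x) = (star x ⬝ᵥ P.mulVec x).re := by
    rw [g_mulVec, hP.eq, hP2]
  have h2 : g ((1 - P).mulVec x) = g x - (star x ⬝ᵥ P.mulVec x).re := by
    rw [g_mulVec]
    have : (1 - P)ᴴ * (1 - P) = 1 - P := by
      rw [Matrix.conjTranspose_sub, Matrix.conjTranspose_one, hP.eq]
      rw [Matrix.sub_mul, Matrix.mul_sub, Matrix.mul_sub, hP2]
      simp
    rw [this, Matrix.sub_mulVec, Matrix.one_mulVec, dotProduct_sub, Complex.sub_re, re_dot_self]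
  have := g_nonneg ((1 - P).mulVec x)
  linarith [h1, h2]

lemma sqrt_g_add_le {N : ℕ} (x y : Fin N → ℂ) :
    g (x + y) ≤ (Real.sqrt (g x) + Real.sqrt (g y))^2 := by
  have key : ∀ z : Fin N → ℂ, g z = ‖(WithLp.equiv 2 (Fin N → ℂ)).symm z‖^2 := by
    intro z
    rw [EuclideanSpace.norm_eq]
    rw [Real.sq_sqrt (Finset.sum_nonneg fun i _ => sq_nonneg _)]
    simp [g, Complex.sq_norm]
  rw [key, key, key]
  rw [Real.sqrt_sq (norm_nonneg _), Real.sqrt_sq (norm_nonneg _)]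
  have heq : (WithLp.equiv 2 (Fin N → ℂ)).symm (x + y) =
      (WithLp.equiv 2 (Fin N → ℂ)).symm x + (WithLp.equiv 2 (Fin N → ℂ)).symm y := rfl
  rw [heq]
  have h := norm_add_le ((WithLp.equiv 2 (Fin N → ℂ)).symm x) ((WithLp.equiv 2 (Fin N → ℂ)).symm y)
  nlinarith [norm_nonneg ((WithLp.equiv 2 (Fin N → ℂ)).symm x),
    norm_nonneg ((WithLp.equiv 2 (Fin N → ℂ)).symm y),
    norm_nonneg ((WithLp.equiv 2 (Fin N → ℂ)).symm x + (WithLp.equiv 2 (Fin N → ℂ)).symm y)]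

lemma kron_mulVec {T N : ℕ} (B : Matrix (Fin N) (Fin N) ℂ) (a : Fin (T+1))
    (x : Fin N × Fin (T+1) → ℂ) (i : Fin N) (s : Fin (T+1)) :
    ((B ⊗ₖ matUnit T a a).mulVec x) (i, s)
      = if s = a then B.mulVec (fun j => x (j, a)) i else 0 := by
  classical
  simp only [Matrix.mulVec, dotProduct, Fintype.sum_prod_type, Matrix.kroneckerMap_apply,
    matUnit, Matrix.single, Matrix.of_apply]
  by_cases hs : s = a
  · subst hs
    simp [mul_ite, ite_mul, Matrix.mulVec, dotProduct, eq_comm]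
  · simp [Ne.symm hs, hs, mul_ite, ite_mul]

end Stmt9Aux

open Stmt9Aux

set_option maxHeartbeats 1000000

/-- The central overlap estimate of the soundness proof: if every valid input
(`A ψ = 0`) is accepted with probability ≤ ε, then for any unit `φ_0` with history
state `Φ`, `‖P_init P_final Φ‖² ≤ (T + ε + 2√ε)/(T+1)`, where `P_init` and `P_final`
project onto the kernels of the input- and output-check terms. -/
theorem stmt9 (T N : ℕ) (hT : 1 ≤ T) (hN : 1 ≤ N)
    (U : Fin T → Matrix (Fin N) (Fin N) ℂ)
    (hU : ∀ t, (U t)ᴴ * U t = 1 ∧ U t * (U t)ᴴ = 1)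
    (A Pacc : Matrix (Fin N) (Fin N) ℂ)
    (hA : A.IsHermitian) (hA2 : A * A = A)
    (hPacc : Pacc.IsHermitian) (hPacc2 : Pacc * Pacc = Pacc)
    (ε : ℝ) (hε0 : 0 ≤ ε) (hε1 : ε ≤ 1)
    (M : Fin (T + 1) → Matrix (Fin N) (Fin N) ℂ)
    (hM0 : M 0 = 1)
    (hMrec : ∀ t : Fin T, M t.succ = U t * M t.castSucc)
    (hsound : ∀ ψ : Fin N → ℂ, star ψ ⬝ᵥ ψ = 1 → A.mulVec ψ = 0 →
      (star (Pacc.mulVec ((M (Fin.last T)).mulVec ψ)) ⬝ᵥ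
        Pacc.mulVec ((M (Fin.last T)).mulVec ψ)).re ≤ ε) :
    ∀ (φ0 : Fin N → ℂ) (Φ : Fin N × Fin (T + 1) → ℂ),
      star φ0 ⬝ᵥ φ0 = 1 →
      Φ = (fun p => (Complex.ofReal (Real.sqrt (T + 1)))⁻¹ * (M p.2).mulVec φ0 p.1) →
      (star ((((1 : Matrix (Fin N × Fin (T + 1)) (Fin N × Fin (T + 1)) ℂ)
            - A ⊗ₖ matUnit T 0 0) *
          ((1 : Matrix (Fin N × Fin (T + 1)) (Fin N × Fin (T + 1)) ℂ)
            - ((1 : Matrix (Fin N) (Fin N) ℂ) - Pacc) ⊗ₖ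
                matUnit T (Fin.last T) (Fin.last T))).mulVec Φ) ⬝ᵥ
        (((1 : Matrix (Fin N × Fin (T + 1)) (Fin N × Fin (T + 1)) ℂ)
            - A ⊗ₖ matUnit T 0 0) *
          ((1 : Matrix (Fin N × Fin (T + 1)) (Fin N × Fin (T + 1)) ℂ)
            - ((1 : Matrix (Fin N) (Fin N) ℂ) - Pacc) ⊗ₖ
                matUnit T (Fin.last T) (Fin.last T))).mulVec Φ).re
        ≤ (T + ε + 2 * Real.sqrt ε) / (T + 1) := by
  classical
  intro φ0 Φ hφ hΦ
  subst hΦ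
  set c : ℂ := (Complex.ofReal (Real.sqrt (T + 1)))⁻¹ with hc
  set L : Fin (T + 1) := Fin.last T with hLdef
  have h0L : (0 : Fin (T + 1)) ≠ L := by
    rw [hLdef]
    intro h
    have h' := congrArg Fin.val h
    simp only [Fin.val_zero, Fin.val_last] at h'
    omega
  -- unitarity of M s
  have hMu : ∀ s, (M s)ᴴ * M s = 1 := by
    intro s
    induction s using Fin.induction with
    | zero => simp [hM0]
    | succ t ih =>
      rw [hMrec t, Matrix.conjTranspose_mul, Matrix.mul_assoc,
        ← Matrix.mul_assoc (U t)ᴴ, (hU t).1, Matrix.one_mul, ih]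
  set Φ0 : Fin N × Fin (T + 1) → ℂ := fun p => c * (M p.2).mulVec φ0 p.1 with hΦ0
  set Qm : Matrix (Fin N × Fin (T + 1)) (Fin N × Fin (T + 1)) ℂ :=
    (1 : Matrix (Fin N × Fin (T + 1)) (Fin N × Fin (T + 1)) ℂ)
      - ((1 : Matrix (Fin N) (Fin N) ℂ) - Pacc) ⊗ₖ matUnit T L L with hQm
  set Pm : Matrix (Fin N × Fin (T + 1)) (Fin N × Fin (T + 1)) ℂ :=
    (1 : Matrix (Fin N × Fin (T + 1)) (Fin N × Fin (T + 1)) ℂ)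
      - A ⊗ₖ matUnit T 0 0 with hPm
  -- step 1: Qm.mulVec Φ0
  have hQΦ : Qm.mulVec Φ0 = fun p =>
      c * (if p.2 = L then Pacc.mulVec ((M L).mulVec φ0) else (M p.2).mulVec φ0) p.1 := by
    funext p
    obtain ⟨i, s⟩ := p
    rw [hQm, Matrix.sub_mulVec, Matrix.one_mulVec]
    simp only [Pi.sub_apply]
    rw [kron_mulVec]
    have harg : (fun j => Φ0 (j, L)) = c • ((M L).mulVec φ0) := by
      funext j; simp [hΦ0, Pi.smul_apply, smul_eq_mul]
    rw [harg, Matrix.mulVec_smul]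
    by_cases hs : s = L
    · subst hs
      simp only [if_pos rfl, if_true, eq_self_iff_true, hΦ0]
      rw [Matrix.sub_mulVec, Matrix.one_mulVec]
      simp only [Pi.smul_apply, Pi.sub_apply, smul_eq_mul]
      ring
    · simp [hs, hΦ0]
  -- step 2: Pm.mulVec (Qm.mulVec Φ0)
  set w : Fin (T + 1) → Fin N → ℂ := fun s =>
    if s = 0 then (1 - A).mulVec φ0
    else if s = L then Pacc.mulVec ((M L).mulVec φ0)
    else (M s).mulVec φ0 with hwdef
  have hW : Pm.mulVec (Qm.mulVec Φ0) = fun p => c * w p.2 p.1 := by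
    rw [hQΦ]
    funext p
    obtain ⟨i, s⟩ := p
    rw [hPm, Matrix.sub_mulVec, Matrix.one_mulVec]
    simp only [Pi.sub_apply]
    rw [kron_mulVec]
    have harg : (fun j =>
        (fun p : Fin N × Fin (T+1) =>
          c * (if p.2 = L then Pacc.mulVec ((M L).mulVec φ0) else (M p.2).mulVec φ0) p.1) (j, 0))
        = c • φ0 := by
      funext j
      simp only [if_neg h0L, Pi.smul_apply, smul_eq_mul]
      rw [hM0, Matrix.one_mulVec]
    rw [harg, Matrix.mulVec_smul]
    by_cases hs : s = 0
    · subst hs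
      simp only [if_pos rfl, if_true, eq_self_iff_true, hwdef, if_neg h0L]
      rw [hM0, Matrix.one_mulVec, Matrix.sub_mulVec, Matrix.one_mulVec]
      simp only [Pi.smul_apply, Pi.sub_apply, smul_eq_mul]
      ring
    · simp only [if_neg hs, sub_zero, hwdef]
  -- rewrite the goal
  rw [← Matrix.mulVec_mulVec, hW]
  -- compute the squared norm
  set a : ℝ := g ((1 - A).mulVec φ0) with hadef
  set d : ℝ := g (Pacc.mulVec ((M L).mulVec φ0)) with hddef
  have hgφ0 : g φ0 = 1 := by
    have := re_dot_self φ0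
    rw [hφ] at this
    simpa using this.symm
  have hnc : Complex.normSq c = ((T : ℝ) + 1)⁻¹ := by
    rw [hc]
    rw [map_inv₀, Complex.normSq_ofReal,
      Real.mul_self_sqrt (by positivity : (0:ℝ) ≤ (T : ℝ) + 1)]
  have hre : (star (fun p : Fin N × Fin (T+1) => c * w p.2 p.1) ⬝ᵥ
      (fun p : Fin N × Fin (T+1) => c * w p.2 p.1)).re
      = ((T : ℝ) + 1)⁻¹ * ∑ s, g (w s) := by
    rw [re_dot_self]
    simp only [g]
    rw [Fintype.sum_prod_type, Finset.sum_comm, Finset.mul_sum]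
    refine Finset.sum_congr rfl fun s _ => ?_
    simp only [Complex.normSq_mul, hnc]
    rw [← Finset.mul_sum]
  rw [hre]
  -- evaluate the sum
  have hptw : ∀ s, g (w s) = 1 + (if s = 0 then a - 1 else 0) + (if s = L then d - 1 else 0) := by
    intro s
    by_cases h0 : s = 0
    · subst h0
      rw [hwdef]
      simp [if_neg h0L, hadef]
    · by_cases hsL : s = L
      · subst hsL
        rw [hwdef]
        simp [if_neg (Ne.symm h0L), if_neg h0, hddef]
      · rw [hwdef]
        simp only [if_neg h0, if_neg hsL]
        rw [g_unitary _ (hMu s), hgφ0]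
        simp [h0, hsL]
  have hsum : ∑ s, g (w s) = (T : ℝ) - 1 + a + d := by
    simp only [hptw]
    rw [Finset.sum_add_distrib, Finset.sum_add_distrib]
    rw [Finset.sum_ite_eq' Finset.univ (0 : Fin (T+1)) (fun _ => a - 1)]
    rw [Finset.sum_ite_eq' Finset.univ L (fun _ => d - 1)]
    simp [Finset.card_univ]
    push_cast
    ring
  rw [hsum]
  -- the core inequality: a + d ≤ 1 + ε + 2 √ε
  have hcore : a + d ≤ 1 + ε + 2 * Real.sqrt ε := by
    set v0 : Fin N → ℂ := (1 - A).mulVec φ0 with hv0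
    set w0 : Fin N → ℂ := A.mulVec φ0 with hw0
    set b : ℝ := g w0 with hbdef
    set x : Fin N → ℂ := Pacc.mulVec ((M L).mulVec v0) with hx
    set y : Fin N → ℂ := Pacc.mulVec ((M L).mulVec w0) with hy
    have hvw : v0 + w0 = φ0 := by
      rw [hv0, hw0, Matrix.sub_mulVec, Matrix.one_mulVec]
      abel
    have hsplit : Pacc.mulVec ((M L).mulVec φ0) = x + y := by
      rw [hx, hy, ← Matrix.mulVec_add, ← Matrix.mulVec_add, hvw]
    have hab : a + b = 1 := by
      have h1A : (1 - A)ᴴ * (1 - A) = 1 - A := by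
        rw [Matrix.conjTranspose_sub, Matrix.conjTranspose_one, hA.eq]
        rw [Matrix.sub_mul, Matrix.mul_sub, Matrix.mul_sub, hA2]
        simp
      have ha' : a = 1 - (star φ0 ⬝ᵥ A.mulVec φ0).re := by
        rw [hadef, g_mulVec, h1A, Matrix.sub_mulVec, Matrix.one_mulVec, dotProduct_sub,
          Complex.sub_re, hφ]
        simp
      have hb' : b = (star φ0 ⬝ᵥ A.mulVec φ0).re := by
        rw [hbdef, hw0, g_mulVec, hA.eq, hA2]
      rw [ha', hb']; ring
    have ha0 : 0 ≤ a := g_nonneg _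
    have hb0 : 0 ≤ b := g_nonneg _
    have hAv0 : A.mulVec v0 = 0 := by
      rw [hv0, Matrix.mulVec_mulVec]
      have : A * (1 - A) = 0 := by rw [Matrix.mul_sub, Matrix.mul_one, hA2]; simp
      rw [this, Matrix.zero_mulVec]
    have hgx : g x ≤ ε * a := by
      by_cases haz : a = 0
      · have hz : v0 = 0 := (g_eq_zero_iff _).mp haz
        rw [hx, hz, Matrix.mulVec_zero, Matrix.mulVec_zero, haz]
        simp [g]
      · have hapos : 0 < a := lt_of_le_of_ne ha0 (Ne.symm haz)
        set cc : ℂ := (Complex.ofReal (Real.sqrt a))⁻¹ with hcc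
        have hncc : Complex.normSq cc = a⁻¹ := by
          rw [hcc, map_inv₀, Complex.normSq_ofReal, Real.mul_self_sqrt ha0]
        have hψ1 : star (cc • v0) ⬝ᵥ (cc • v0) = 1 := by
          rw [dot_self_eq_g, g_smul, hncc, ← hadef, inv_mul_cancel₀ haz]
          norm_num
        have hψ2 : A.mulVec (cc • v0) = 0 := by
          rw [Matrix.mulVec_smul, hAv0, smul_zero]
        have hs := hsound (cc • v0) hψ1 hψ2
        rw [Matrix.mulVec_smul, Matrix.mulVec_smul, re_dot_self, g_smul, hncc] at hs
        calc g x = a * (a⁻¹ * g x) := by field_simp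
          _ ≤ a * ε := by
              apply mul_le_mul_of_nonneg_left _ ha0
              exact hs
          _ = ε * a := mul_comm _ _
    have hgy : g y ≤ b := by
      calc g y ≤ g ((M L).mulVec w0) := g_proj_le Pacc hPacc hPacc2 _
        _ = g w0 := g_unitary _ (hMu L) _
    have hd2 : d ≤ (Real.sqrt (g x) + Real.sqrt (g y))^2 := by
      rw [hddef, hsplit]
      exact sqrt_g_add_le x y
    have h1 : Real.sqrt (g x) ≤ Real.sqrt ε * Real.sqrt a := by
      rw [← Real.sqrt_mul hε0]
      exact Real.sqrt_le_sqrt hgx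
    have h2 : Real.sqrt (g y) ≤ Real.sqrt b := Real.sqrt_le_sqrt hgy
    have hsa : Real.sqrt a ≤ 1 := by
      rw [show (1:ℝ) = Real.sqrt 1 by simp]
      exact Real.sqrt_le_sqrt (by linarith)
    have hsb : Real.sqrt b ≤ 1 := by
      rw [show (1:ℝ) = Real.sqrt 1 by simp]
      exact Real.sqrt_le_sqrt (by linarith)
    have hsε : 0 ≤ Real.sqrt ε := Real.sqrt_nonneg _
    have hsqa : Real.sqrt a ^ 2 = a := Real.sq_sqrt ha0
    have hsqb : Real.sqrt b ^ 2 = b := Real.sq_sqrt hb0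
    have hsqε : Real.sqrt ε ^ 2 = ε := Real.sq_sqrt hε0
    have hgx0 : 0 ≤ Real.sqrt (g x) := Real.sqrt_nonneg _
    have hgy0 : 0 ≤ Real.sqrt (g y) := Real.sqrt_nonneg _
    have hstep : (Real.sqrt (g x) + Real.sqrt (g y))^2
        ≤ (Real.sqrt ε * Real.sqrt a + Real.sqrt b)^2 := by
      have hsum' : Real.sqrt (g x) + Real.sqrt (g y)
          ≤ Real.sqrt ε * Real.sqrt a + Real.sqrt b := add_le_add h1 h2
      nlinarith [hgx0, hgy0]
    have hexp : (Real.sqrt ε * Real.sqrt a + Real.sqrt b)^2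
        = ε * a + 2 * (Real.sqrt ε * (Real.sqrt a * Real.sqrt b)) + b := by
      have hid : (Real.sqrt ε * Real.sqrt a + Real.sqrt b)^2
          = Real.sqrt ε ^ 2 * Real.sqrt a ^ 2
            + 2 * (Real.sqrt ε * (Real.sqrt a * Real.sqrt b)) + Real.sqrt b ^ 2 := by ring
      rw [hid, hsqa, hsqb, hsqε]
    have hεa : ε * a ≤ ε := by nlinarith
    have hab1 : Real.sqrt a * Real.sqrt b ≤ 1 :=
      mul_le_one₀ hsa (Real.sqrt_nonneg b) hsb
    have hmid : Real.sqrt ε * (Real.sqrt a * Real.sqrt b) ≤ Real.sqrt ε := by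
      nlinarith [mul_nonneg (Real.sqrt_nonneg a) (Real.sqrt_nonneg b)]
    have hd3 : d ≤ ε * a + 2 * (Real.sqrt ε * (Real.sqrt a * Real.sqrt b)) + b := by
      rw [← hexp]; exact le_trans hd2 hstep
    linarith
  -- finish
  have hTpos : (0:ℝ) < (T : ℝ) + 1 := by positivity
  rw [div_eq_inv_mul]
  apply mul_le_mul_of_nonneg_left _ (le_of_lt (inv_pos.mpr hTpos))
  linarith
end

section
/- Let T ≥ 1 and let L be the (T+1)×(T+1) path matrix. Then the eigenvalues of L, each with multiplicity one, are exactly 1 − cos(kπ/(T+1)) for k = 0, 1, …, T; equivalently, there exists an orthogonal basis v_0,…,v_T of ℝ^{T+1} with L v_k = (1 − cos(kπ/(T+1))) v_k for each k. -/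
open Matrix Kronecker ComplexOrder

/-- The `(T+1)×(T+1)` path matrix: `L_{0,0} = L_{T,T} = 1/2`, `L_{t,t} = 1` for
`0 < t < T`, `L_{t,t-1} = L_{t-1,t} = -1/2`, and `0` otherwise. -/
noncomputable def pathMatrix (T : ℕ) : Matrix (Fin (T + 1)) (Fin (T + 1)) ℝ :=
  Matrix.of fun s t =>
    if s = t then (if s = 0 ∨ s = Fin.last T then 1 / 2 else 1)
    else if (s : ℕ) + 1 = (t : ℕ) ∨ (t : ℕ) + 1 = (s : ℕ) then -(1 / 2) else 0

lemma cos_three_term (c x : ℝ) :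
    Real.cos (x - c) + Real.cos (x + c) = 2 * Real.cos c * Real.cos x := by
  rw [Real.cos_sub, Real.cos_add]; ring

lemma sin_ne_of_abs_lt_pi {x : ℝ} (h0 : x ≠ 0) (h : |x| < Real.pi) : Real.sin x ≠ 0 := by
  intro hs
  rw [Real.sin_eq_zero_iff] at hs
  obtain ⟨n, hn⟩ := hs
  rcases eq_or_ne n 0 with rfl | hn0
  · simp at hn; exact h0 hn.symm
  · have : (1 : ℝ) ≤ |(n : ℝ)| := by
      have : (1 : ℤ) ≤ |n| := Int.one_le_abs hn0
      exact_mod_cast this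
    have hπ : (0:ℝ) < Real.pi := Real.pi_pos
    have : Real.pi ≤ |x| := by
      rw [← hn, abs_mul, abs_of_pos hπ]
      nlinarith
    linarith

lemma aux_sin_ne (T : ℕ) (m : ℤ) (h0 : m ≠ 0) (hm : |m| ≤ 2 * T + 1) :
    Real.sin ((m : ℝ) * Real.pi / (T + 1) / 2) ≠ 0 := by
  have hπ : (0:ℝ) < Real.pi := Real.pi_pos
  have hT : (0:ℝ) < (T:ℝ) + 1 := by positivity
  apply sin_ne_of_abs_lt_pi
  · have hm0 : (m:ℝ) ≠ 0 := Int.cast_ne_zero.mpr h0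
    positivity
  · have h1 : |(m:ℝ)| ≤ 2 * (T:ℝ) + 1 := by exact_mod_cast (by exact_mod_cast hm : |(m:ℝ)| ≤ ((2*T+1 : ℤ) : ℝ))
    rw [abs_div, abs_div, abs_mul, abs_of_pos hπ, abs_of_pos hT, abs_of_pos (by norm_num : (0:ℝ) < 2)]
    rw [div_div, div_lt_iff₀ (by positivity)]
    nlinarith

/-- key cancellation: for real `m` with `sin(mπ/(2(T+1))) ≠ 0` and `sin(mπ) = 0`,
the sum `∑_{t=0}^{T} cos(mπ(t+1/2)/(T+1))` vanishes. -/
lemma sum_cos_zero (T : ℕ) (m : ℝ)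
    (h1 : Real.sin (m * Real.pi / (T + 1) / 2) ≠ 0)
    (h2 : Real.sin (m * Real.pi) = 0) :
    ∑ t ∈ Finset.range (T + 1), Real.cos (m * Real.pi / (T + 1) * ((t : ℝ) + 1 / 2)) = 0 := by
  set θ := m * Real.pi / (T + 1) with hθ
  have hT : ((T:ℝ) + 1) ≠ 0 := by positivity
  have key : ∀ t : ℕ, Real.cos (θ * ((t : ℝ) + 1 / 2)) * (2 * Real.sin (θ / 2))
      = Real.sin (θ * ((t : ℝ) + 1)) - Real.sin (θ * (t : ℝ)) := by
    intro t
    rw [Real.sin_sub_sin]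
    have e1 : (θ * ((t : ℝ) + 1) - θ * (t : ℝ)) / 2 = θ / 2 := by ring
    have e2 : (θ * ((t : ℝ) + 1) + θ * (t : ℝ)) / 2 = θ * ((t : ℝ) + 1 / 2) := by ring
    rw [e1, e2]; ring
  have tele : ∑ t ∈ Finset.range (T + 1),
      (Real.sin (θ * ((t : ℝ) + 1)) - Real.sin (θ * (t : ℝ)))
      = Real.sin (θ * (((T + 1 : ℕ) : ℝ))) - Real.sin (θ * ((0 : ℕ) : ℝ)) := by
    have := Finset.sum_range_sub (fun t : ℕ => Real.sin (θ * (t : ℝ))) (T + 1)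
    simpa [push_cast] using this
  have main : (∑ t ∈ Finset.range (T + 1), Real.cos (θ * ((t : ℝ) + 1 / 2)))
      * (2 * Real.sin (θ / 2)) = 0 := by
    rw [Finset.sum_mul]
    simp_rw [key]
    rw [tele]
    have : θ * (((T + 1 : ℕ) : ℝ)) = m * Real.pi := by
      rw [hθ]; push_cast; field_simp
    rw [this]
    simp [h2]
  have hne : (2 * Real.sin (θ / 2)) ≠ 0 := by
    simp only [mul_ne_zero_iff]
    exact ⟨by norm_num, h1⟩
  exact (mul_eq_zero.mp main).resolve_right hne

/-- The spectrum of the path matrix: there is an orthogonal basis `v_0, …, v_T` of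
`ℝ^{T+1}` with `L v_k = (1 - cos(kπ/(T+1))) v_k`; i.e. the eigenvalues of `L`, each with
multiplicity one, are exactly `1 - cos(kπ/(T+1))` for `k = 0, …, T`. -/
theorem stmt13 (T : ℕ) (hT : 1 ≤ T) :
    ∃ v : Fin (T + 1) → Fin (T + 1) → ℝ,
      (∀ k, v k ≠ 0) ∧
      (∀ k l, k ≠ l → v k ⬝ᵥ v l = 0) ∧
      (∀ k, (pathMatrix T).mulVec (v k)
        = (1 - Real.cos (((k : ℕ) : ℝ) * Real.pi / (T + 1))) • v k) := by
  have hπ : (0:ℝ) < Real.pi := Real.pi_pos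
  have hT1 : (0:ℝ) < (T:ℝ) + 1 := by positivity
  refine ⟨fun k t => Real.cos (((k : ℕ) : ℝ) * Real.pi / (T + 1) * (((t : ℕ) : ℝ) + 1 / 2)),
    ?_, ?_, ?_⟩
  · -- nonzero
    intro k hk
    have h0 := congrFun hk 0
    simp only [Pi.zero_apply] at h0
    have hval : (((0 : Fin (T+1)) : ℕ) : ℝ) = 0 := by norm_num
    rw [hval] at h0
    have hk1 : ((k : ℕ) : ℝ) ≤ (T : ℝ) := by
      exact_mod_cast Nat.le_of_lt_succ k.isLt
    have harg : ((k : ℕ) : ℝ) * Real.pi / (T + 1) * (0 + 1 / 2) ∈ Set.Ioo (-(Real.pi/2)) (Real.pi/2) := by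
      constructor
      · have : (0:ℝ) ≤ ((k : ℕ) : ℝ) * Real.pi / (T + 1) * (0 + 1 / 2) := by positivity
        linarith [Real.pi_pos]
      · rw [div_mul_eq_mul_div, div_lt_iff₀ hT1]
        nlinarith
    exact absurd h0 (ne_of_gt (Real.cos_pos_of_mem_Ioo harg))
  · -- orthogonality
    intro k l hkl
    have hkv : (k : ℕ) ≠ (l : ℕ) := fun h => hkl (Fin.ext h)
    simp only [dotProduct]
    have hsum : ∑ t : Fin (T + 1),
        Real.cos (((k : ℕ) : ℝ) * Real.pi / (T + 1) * (((t : ℕ) : ℝ) + 1 / 2)) *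
          Real.cos (((l : ℕ) : ℝ) * Real.pi / (T + 1) * (((t : ℕ) : ℝ) + 1 / 2))
        = ∑ t ∈ Finset.range (T + 1),
          Real.cos (((k : ℕ) : ℝ) * Real.pi / (T + 1) * ((t : ℝ) + 1 / 2)) *
            Real.cos (((l : ℕ) : ℝ) * Real.pi / (T + 1) * ((t : ℝ) + 1 / 2)) :=
      Fin.sum_univ_eq_sum_range (fun t : ℕ =>
        Real.cos (((k : ℕ) : ℝ) * Real.pi / (T + 1) * ((t : ℝ) + 1 / 2)) *
          Real.cos (((l : ℕ) : ℝ) * Real.pi / (T + 1) * ((t : ℝ) + 1 / 2))) (T + 1)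
    rw [hsum]
    have pointwise : ∀ t : ℕ,
        Real.cos (((k : ℕ) : ℝ) * Real.pi / (T + 1) * ((t : ℝ) + 1 / 2)) *
          Real.cos (((l : ℕ) : ℝ) * Real.pi / (T + 1) * ((t : ℝ) + 1 / 2))
        = (Real.cos ((((k : ℕ) : ℝ) - ((l : ℕ) : ℝ)) * Real.pi / (T + 1) * ((t : ℝ) + 1 / 2))
          + Real.cos ((((k : ℕ) : ℝ) + ((l : ℕ) : ℝ)) * Real.pi / (T + 1) * ((t : ℝ) + 1 / 2))) / 2 := by
      intro t
      have := cos_three_term (((l : ℕ) : ℝ) * Real.pi / (T + 1) * ((t : ℝ) + 1 / 2))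
        (((k : ℕ) : ℝ) * Real.pi / (T + 1) * ((t : ℝ) + 1 / 2))
      have e1 : ((k : ℕ) : ℝ) * Real.pi / (T + 1) * ((t : ℝ) + 1 / 2)
          - ((l : ℕ) : ℝ) * Real.pi / (T + 1) * ((t : ℝ) + 1 / 2)
          = (((k : ℕ) : ℝ) - ((l : ℕ) : ℝ)) * Real.pi / (T + 1) * ((t : ℝ) + 1 / 2) := by ring
      have e2 : ((k : ℕ) : ℝ) * Real.pi / (T + 1) * ((t : ℝ) + 1 / 2)
          + ((l : ℕ) : ℝ) * Real.pi / (T + 1) * ((t : ℝ) + 1 / 2)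
          = (((k : ℕ) : ℝ) + ((l : ℕ) : ℝ)) * Real.pi / (T + 1) * ((t : ℝ) + 1 / 2) := by ring
      rw [e1, e2] at this
      linarith
    simp_rw [pointwise]
    have hd : Real.sin ((((k : ℕ) : ℝ) - ((l : ℕ) : ℝ)) * Real.pi / (T + 1) / 2) ≠ 0 := by
      have : ((((k : ℕ) : ℤ) - ((l : ℕ) : ℤ) : ℤ) : ℝ) = ((k : ℕ) : ℝ) - ((l : ℕ) : ℝ) := by push_cast; ring
      rw [← this]
      apply aux_sin_ne T _ (by omega)
      have h1 : (k : ℕ) ≤ T := Nat.le_of_lt_succ k.isLt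
      have h2 : (l : ℕ) ≤ T := Nat.le_of_lt_succ l.isLt
      rw [abs_le]
      constructor <;> omega
    have hd2 : Real.sin ((((k : ℕ) : ℝ) - ((l : ℕ) : ℝ)) * Real.pi) = 0 := by
      have : ((((k : ℕ) : ℤ) - ((l : ℕ) : ℤ) : ℤ) : ℝ) = ((k : ℕ) : ℝ) - ((l : ℕ) : ℝ) := by push_cast; ring
      rw [← this]; exact Real.sin_int_mul_pi _
    have hs : Real.sin ((((k : ℕ) : ℝ) + ((l : ℕ) : ℝ)) * Real.pi / (T + 1) / 2) ≠ 0 := by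
      have : ((((k : ℕ) : ℤ) + ((l : ℕ) : ℤ) : ℤ) : ℝ) = ((k : ℕ) : ℝ) + ((l : ℕ) : ℝ) := by push_cast; ring
      rw [← this]
      apply aux_sin_ne T _ (by omega)
      have h1 : (k : ℕ) ≤ T := Nat.le_of_lt_succ k.isLt
      have h2 : (l : ℕ) ≤ T := Nat.le_of_lt_succ l.isLt
      rw [abs_le]
      constructor <;> omega
    have hs2 : Real.sin ((((k : ℕ) : ℝ) + ((l : ℕ) : ℝ)) * Real.pi) = 0 := by
      have : ((((k : ℕ) : ℤ) + ((l : ℕ) : ℤ) : ℤ) : ℝ) = ((k : ℕ) : ℝ) + ((l : ℕ) : ℝ) := by push_cast; ring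
      rw [← this]; exact Real.sin_int_mul_pi _
    rw [← Finset.sum_div, Finset.sum_add_distrib, sum_cos_zero T _ hd hd2,
      sum_cos_zero T _ hs hs2]
    norm_num
  · -- eigenvector equation
    intro k
    set c : ℝ := ((k : ℕ) : ℝ) * Real.pi / (T + 1) with hc
    set F : ℕ → ℝ := fun m => Real.cos (c * ((m : ℝ) + 1 / 2)) with hF
    have hrec : ∀ m : ℕ, F m + F (m + 2) = 2 * Real.cos c * F (m + 1) := by
      intro m
      have := cos_three_term c (c * (((m : ℕ) : ℝ) + 1 + 1 / 2))
      have e1 : c * (((m : ℕ) : ℝ) + 1 + 1 / 2) - c = c * (((m : ℕ) : ℝ) + 1 / 2) := by ring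
      have e2 : c * (((m : ℕ) : ℝ) + 1 + 1 / 2) + c = c * (((m : ℕ) : ℝ) + 2 + 1 / 2) := by ring
      rw [e1, e2] at this
      simp only [hF]
      push_cast
      convert this using 3 <;> push_cast <;> ring
    have F1 : F 0 + F 1 = 2 * Real.cos c * F 0 := by
      have := cos_three_term c (c * ((0 : ℝ) + 1 / 2))
      have e1 : c * ((0 : ℝ) + 1 / 2) - c = -(c * ((0 : ℝ) + 1 / 2)) := by ring
      have e2 : c * ((0 : ℝ) + 1 / 2) + c = c * ((1 : ℝ) + 1 / 2) := by ring
      rw [e1, e2, Real.cos_neg] at this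
      simp only [hF]
      push_cast
      convert this using 3 <;> ring
    have FT : F (T + 1) = F T := by
      have e1 : c * (((T + 1 : ℕ) : ℝ) + 1 / 2) = ((k : ℕ) : ℝ) * Real.pi + c / 2 := by
        rw [hc]; push_cast; field_simp
      have e2 : c * (((T : ℕ) : ℝ) + 1 / 2) = ((k : ℕ) : ℝ) * Real.pi - c / 2 := by
        rw [hc]; push_cast; field_simp; ring
      have hsin : Real.sin (((k : ℕ) : ℝ) * Real.pi) = 0 := by
        have : ((((k:ℕ) : ℤ)) : ℝ) = ((k : ℕ) : ℝ) := by push_cast; ring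
        rw [← this]; exact Real.sin_int_mul_pi _
      simp only [hF]
      rw [e1, e2, Real.cos_add, Real.cos_sub, hsin]
      ring
    -- row decomposition
    funext s
    have hsval : (s : ℕ) < T + 1 := s.isLt
    have hmv : (pathMatrix T).mulVec (fun t : Fin (T+1) => F (t : ℕ)) s
        = ∑ t : Fin (T + 1), pathMatrix T s t * F (t : ℕ) := by
      simp [Matrix.mulVec, dotProduct]
    have decomp : ∀ t : Fin (T + 1), pathMatrix T s t * F (t : ℕ)
        = (if t = s then (if (s:ℕ) = 0 ∨ (s:ℕ) = T then (1:ℝ)/2 else 1) * F (t:ℕ) else 0)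
          + (if (t:ℕ) + 1 = (s:ℕ) then -(1/2) * F (t:ℕ) else 0)
          + (if (s:ℕ) + 1 = (t:ℕ) then -(1/2) * F (t:ℕ) else 0) := by
      intro t
      simp only [pathMatrix, Matrix.of_apply, Fin.ext_iff, Fin.val_last, Fin.val_zero]
      split_ifs <;> first | ring1 | (exfalso; omega)
    rw [hmv]
    simp_rw [decomp]
    rw [Finset.sum_add_distrib, Finset.sum_add_distrib]
    have S1 : (∑ t : Fin (T+1), if t = s then (if (s:ℕ) = 0 ∨ (s:ℕ) = T then (1:ℝ)/2 else 1) * F (t:ℕ) else 0)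
        = (if (s:ℕ) = 0 ∨ (s:ℕ) = T then (1:ℝ)/2 else 1) * F (s:ℕ) := by
      rw [Finset.sum_ite_eq' Finset.univ s]
      simp
    have S2 : (∑ t : Fin (T+1), if (t:ℕ) + 1 = (s:ℕ) then -(1/2:ℝ) * F (t:ℕ) else 0)
        = if (s:ℕ) = 0 then 0 else -(1/2:ℝ) * F ((s:ℕ) - 1) := by
      by_cases hs0 : (s:ℕ) = 0
      · rw [if_pos hs0]
        apply Finset.sum_eq_zero
        intro t _
        rw [if_neg (by omega)]
      · rw [if_neg hs0]
        have ht0 : ((s:ℕ) - 1) < T + 1 := by omega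
        have hcond : ∀ t : Fin (T+1), ((t:ℕ) + 1 = (s:ℕ)) ↔ (t = ⟨(s:ℕ) - 1, ht0⟩) := by
          intro t
          rw [Fin.ext_iff]
          simp only [Fin.val_mk]
          constructor <;> intro h <;> omega
        simp_rw [hcond]
        rw [Finset.sum_ite_eq' Finset.univ (⟨(s:ℕ) - 1, ht0⟩ : Fin (T+1))]
        simp
    have S3 : (∑ t : Fin (T+1), if (s:ℕ) + 1 = (t:ℕ) then -(1/2:ℝ) * F (t:ℕ) else 0)
        = if (s:ℕ) = T then 0 else -(1/2:ℝ) * F ((s:ℕ) + 1) := by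
      by_cases hsT : (s:ℕ) = T
      · rw [if_pos hsT]
        apply Finset.sum_eq_zero
        intro t _
        have := t.isLt
        rw [if_neg (by omega)]
      · rw [if_neg hsT]
        have ht0 : ((s:ℕ) + 1) < T + 1 := by omega
        have hcond : ∀ t : Fin (T+1), ((s:ℕ) + 1 = (t:ℕ)) ↔ (t = ⟨(s:ℕ) + 1, ht0⟩) := by
          intro t
          rw [Fin.ext_iff]
          simp only [Fin.val_mk]
          constructor <;> intro h <;> omega
        simp_rw [hcond]
        rw [Finset.sum_ite_eq' Finset.univ (⟨(s:ℕ) + 1, ht0⟩ : Fin (T+1))]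
        simp
    rw [S1, S2, S3]
    have hrhs : ((1 - Real.cos c) • (fun t : Fin (T+1) => F (t : ℕ))) s = (1 - Real.cos c) * F (s:ℕ) := by
      simp [smul_eq_mul]
    rw [hrhs]
    -- case analysis on the row index
    by_cases hs0 : (s:ℕ) = 0
    · have hsT : (s:ℕ) ≠ T := by omega
      rw [if_pos (Or.inl hs0), if_pos hs0, if_neg hsT, hs0]
      have h1 : F 1 = 2 * Real.cos c * F 0 - F 0 := by linarith [F1]
      rw [h1]; ring
    · by_cases hsT : (s:ℕ) = T
      · rw [if_pos (Or.inr hsT), if_neg hs0, if_pos hsT, hsT]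
        have hr := hrec (T - 1)
        have e1 : T - 1 + 2 = T + 1 := by omega
        have e2 : T - 1 + 1 = T := by omega
        rw [e1, e2, FT] at hr
        have hTm : F (T - 1) = 2 * Real.cos c * F T - F T := by linarith
        rw [hTm]; ring
      · rw [if_neg (by tauto), if_neg hs0, if_neg hsT]
        have hr := hrec ((s:ℕ) - 1)
        have e1 : (s:ℕ) - 1 + 2 = (s:ℕ) + 1 := by omega
        have e2 : (s:ℕ) - 1 + 1 = (s:ℕ) := by omega
        rw [e1, e2] at hr
        have : F ((s:ℕ) - 1) = 2 * Real.cos c * F (s:ℕ) - F ((s:ℕ) + 1) := by linarith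
        rw [this]; ring
end
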